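/- Let {X_n} have periodic dependence with period d and common marginal distribution function F. For each τ > 0 let x_n(τ) be a sequence of real numbers with n·F̄(x_n(τ)) → τ, and suppose {X_n} satisfies AIM(x_n(τ)) for each τ > 0. If P(M_n ≤ x_n(τ)) converges as n → ∞ for a single value τ > 0, then it converges for all τ > 0, and there exists γ ∈ [0,1] such that P(M_n ≤ x_n(τ)) → e^{−τγ} for every τ > 0. -/

import Mathlib

open MeasureTheory Filter Finset Asymptotics

/-- Probability of an event as a real number. -/
noncomputable def pr {Ω : Type*} [MeasurableSpace Ω] (P : Measure Ω) (A : Set Ω) : ℝ :=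
  (P A).toReal

/-- The event that `X i ≤ x` for every index `i` in the set `S`;
this is the event `{M(S) ≤ x}` where `M(S) = max {X i : i ∈ S}`. -/
def allLe {Ω : Type*} (X : ℕ → Ω → ℝ) (S : Set ℕ) (x : ℝ) : Set Ω :=
  {ω | ∀ i ∈ S, X i ω ≤ x}

/-- `α` is a sequence of AIM mixing coefficients for `X` relative to thresholds `xs`
with separation sequence `q`: for any two intervals `I₁ = [a,b]`, `I₂ = [b+qₙ+1, c]`
contained in `{1,…,n}`, separated by `qₙ`, each of cardinality at least `qₙ`,
the maximum-based discrepancy is bounded by `α n`. -/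
def AIMBound {Ω : Type*} [MeasurableSpace Ω] (P : Measure Ω) (X : ℕ → Ω → ℝ)
    (xs : ℕ → ℝ) (q : ℕ → ℕ) (α : ℕ → ℝ) : Prop :=
  ∀ n a b c : ℕ, 1 ≤ a → a ≤ b → b + q n + 1 ≤ c → c ≤ n →
    q n ≤ b + 1 - a → q n ≤ c - (b + q n) →
    |pr P (allLe X (Set.Icc a b ∪ Set.Icc (b + q n + 1) c) (xs n)) -
      pr P (allLe X (Set.Icc a b) (xs n)) *
        pr P (allLe X (Set.Icc (b + q n + 1) c) (xs n))| ≤ α n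

/-- `X` has periodic dependence with period `d`: any finite-dimensional joint
distribution is invariant under shifting all indices by `d`. -/
def PeriodicDep {Ω : Type*} [MeasurableSpace Ω] (P : Measure Ω) (X : ℕ → Ω → ℝ)
    (d : ℕ) : Prop :=
  ∀ (k : ℕ) (t : Fin k → ℕ), (∀ i, 1 ≤ t i) →
    Measure.map (fun ω (i : Fin k) => X (t i) ω) P =
      Measure.map (fun ω (i : Fin k) => X (t i + d) ω) P

/-!
Cut `{1, …, n}` into `k` blocks whose common length `m ≈ n / k` is a multiple of the period
`d`. Deleting the first `qₙ = o(n)` indices of each block changes `P(Mₙ ≤ xₙ(τ))` by `o(1)`,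
since `n F̄(xₙ(τ)) → τ`; AIM then factorises the probability over the blocks, and periodicity
makes the blocks identically distributed. Hence `P(Mₙ ≤ xₙ(τ)) − P(M_m ≤ x_m(τ / k))ᵏ → 0`,
which turns the limit `L` at `τ₀` into the limit `L^{j/k}` at every `j τ₀ / k`. The estimate
`|P(Mₙ ≤ u) − P(Mₙ ≤ v)| ≤ n |F(u) − F(v)|` extends this to every `τ > 0`, and Boole's
inequality `P(Mₙ ≤ xₙ(τ)) ≥ 1 − n F̄(xₙ(τ))` gives `L^{1/k} ≥ 1 − τ₀ / k`, hence `L ≥ e^{−τ₀}`,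
so that `γ := −log L / τ₀` lies in `[0, 1]`.
-/

open Topology

lemma allLe_anti {Ω : Type*} {X : ℕ → Ω → ℝ} {S T : Set ℕ} (h : S ⊆ T) (u : ℝ) :
    allLe X T u ⊆ allLe X S u :=
  fun _ hω i hi => hω i (h hi)

lemma allLe_mono {Ω : Type*} {X : ℕ → Ω → ℝ} {S : Set ℕ} {u v : ℝ} (h : u ≤ v) :
    allLe X S u ⊆ allLe X S v :=
  fun _ hω i hi => (hω i hi).trans h

section Probability

variable {Ω : Type*} [MeasurableSpace Ω] {P : Measure Ω} {X : ℕ → Ω → ℝ} {F : ℝ → ℝ}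

lemma pr_eq_real (A : Set Ω) : pr P A = P.real A := rfl

lemma pr_nonneg (A : Set Ω) : 0 ≤ pr P A := measureReal_nonneg

lemma pr_le_one [IsProbabilityMeasure P] (A : Set Ω) : pr P A ≤ 1 := measureReal_le_one

lemma pr_mono [IsFiniteMeasure P] {A B : Set Ω} (h : A ⊆ B) : pr P A ≤ pr P B :=
  measureReal_mono h

lemma pr_le_pr_add_sum [IsFiniteMeasure P] {A B : Set Ω} {s : Finset ℕ} {E : ℕ → Set Ω}
    (h : A ⊆ B ∪ ⋃ i ∈ s, E i) : pr P A ≤ pr P B + ∑ i ∈ s, pr P (E i) :=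
  (measureReal_mono h).trans <| (measureReal_union_le _ _).trans <|
    add_le_add_right (measureReal_biUnion_finset_le _ _) _

lemma pr_lt_eq_one_sub [IsProbabilityMeasure P] {i : ℕ} (hmeas : Measurable (X i)) {t : ℝ}
    (hF : pr P {ω | X i ω ≤ t} = F t) : pr P {ω | t < X i ω} = 1 - F t := by
  have hc : {ω | t < X i ω} = {ω | X i ω ≤ t}ᶜ := by ext; simp
  rw [hc, pr_eq_real, probReal_compl_eq_one_sub (measurableSet_le hmeas measurable_const)]
  exact congrArg _ hF

lemma pr_le_sdiff_le_eq_sub [IsFiniteMeasure P] {i : ℕ} (hmeas : Measurable (X i)) {u v : ℝ}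
    (huv : u ≤ v) (hFu : pr P {ω | X i ω ≤ u} = F u) (hFv : pr P {ω | X i ω ≤ v} = F v) :
    pr P ({ω | X i ω ≤ v} \ {ω | X i ω ≤ u}) = F v - F u := by
  rw [pr_eq_real, measureReal_sdiff (Set.ofPred_subset_ofPred.2 fun ω h => h.trans huv)
    (measurableSet_le hmeas measurable_const)]
  exact congrArg₂ _ hFv hFu

lemma F_le_one [IsProbabilityMeasure P]
    (hF : ∀ i, 1 ≤ i → ∀ t : ℝ, pr P {ω | X i ω ≤ t} = F t) (u : ℝ) : F u ≤ 1 := by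
  rw [← hF 1 le_rfl u]; exact pr_le_one _

variable [IsProbabilityMeasure P] (hmeas : ∀ i, Measurable (X i))
  (hF : ∀ i, 1 ≤ i → ∀ t : ℝ, pr P {ω | X i ω ≤ t} = F t)
include hmeas hF

lemma abs_pr_allLe_sub_le_of_subset {s t : Finset ℕ} (hst : s ⊆ t)
    (ht : ∀ i ∈ t, 1 ≤ i) {r : ℕ} (hcard : #t ≤ #s + r) (u : ℝ) :
    |pr P (allLe X t u) - pr P (allLe X s u)| ≤ r * (1 - F u) := by
  have hanti : pr P (allLe X t u) ≤ pr P (allLe X s u) :=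
    pr_mono (allLe_anti (Finset.coe_subset.2 hst) u)
  have hunion : pr P (allLe X s u) ≤ pr P (allLe X t u) + ∑ i ∈ t \ s, pr P {ω | u < X i ω} := by
    refine pr_le_pr_add_sum fun ω hω => ?_
    by_cases hωt : ω ∈ allLe X t u
    · exact Or.inl hωt
    simp only [allLe, Set.mem_ofPred_eq, not_forall, not_le] at hωt
    obtain ⟨i, hit, hi⟩ := hωt
    exact Or.inr (Set.mem_biUnion (mem_sdiff.2 ⟨hit, fun his => (hω i his).not_gt hi⟩) hi)
  rw [sum_congr rfl fun i hi => pr_lt_eq_one_sub (hmeas i) (hF i (ht i (mem_sdiff.1 hi).1) u),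
    sum_const, card_sdiff_of_subset hst, nsmul_eq_mul] at hunion
  have hcast : ((#t - #s : ℕ) : ℝ) ≤ r := by exact_mod_cast (by omega : #t - #s ≤ r)
  have hF1 : 0 ≤ 1 - F u := sub_nonneg.2 (F_le_one hF u)
  rw [abs_sub_comm, abs_of_nonneg (sub_nonneg.2 hanti)]
  nlinarith

lemma abs_pr_allLe_sub_le_of_le {s : Finset ℕ} (hs : ∀ i ∈ s, 1 ≤ i) (u v : ℝ) :
    |pr P (allLe X s u) - pr P (allLe X s v)| ≤ #s * |F u - F v| := by
  wlog huv : u ≤ v generalizing u v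
  · rw [abs_sub_comm, abs_sub_comm (F u)]; exact this v u (le_of_not_ge huv)
  have hunion : pr P (allLe X s v) ≤ pr P (allLe X s u) +
      ∑ i ∈ s, pr P ({ω | X i ω ≤ v} \ {ω | X i ω ≤ u}) := by
    refine pr_le_pr_add_sum fun ω hω => ?_
    by_cases hωu : ω ∈ allLe X s u
    · exact Or.inl hωu
    simp only [allLe, Set.mem_ofPred_eq, not_forall, not_le] at hωu
    obtain ⟨i, his, hi⟩ := hωu
    exact Or.inr (Set.mem_biUnion his ⟨hω i his, hi.not_ge⟩)
  rw [sum_congr rfl fun i hi => pr_le_sdiff_le_eq_sub (hmeas i) huv (hF i (hs i hi) u)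
    (hF i (hs i hi) v), sum_const, nsmul_eq_mul] at hunion
  rw [abs_sub_comm, abs_of_nonneg (sub_nonneg.2 (pr_mono (allLe_mono huv))),
    abs_sub_comm]
  exact (sub_le_iff_le_add'.2 hunion).trans
    (mul_le_mul_of_nonneg_left (le_abs_self _) (Nat.cast_nonneg _))

lemma abs_pr_Icc_sub_le (n : ℕ) (u v : ℝ) :
    |pr P (allLe X (Set.Icc 1 n) u) - pr P (allLe X (Set.Icc 1 n) v)| ≤
      |n * (1 - F u) - n * (1 - F v)| := by
  have h := abs_pr_allLe_sub_le_of_le hmeas hF (s := Finset.Icc 1 n)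
    (fun i hi => (mem_Icc.1 hi).1) u v
  rw [coe_Icc, Nat.card_Icc, Nat.add_sub_cancel] at h
  rwa [show (n : ℝ) * (1 - F u) - n * (1 - F v) = n * (F v - F u) by ring, abs_mul,
    Nat.abs_cast, abs_sub_comm (F v)]

lemma one_sub_le_pr_Icc (n : ℕ) (u : ℝ) :
    1 - n * (1 - F u) ≤ pr P (allLe X (Set.Icc 1 n) u) := by
  have h := abs_pr_allLe_sub_le_of_subset hmeas hF (empty_subset (Finset.Icc 1 n))
    (fun i hi => (mem_Icc.1 hi).1) (r := n) (by simp) u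
  rw [coe_Icc, coe_empty, show allLe X ∅ u = Set.univ by ext; simp [allLe],
    show pr P Set.univ = 1 from probReal_univ] at h
  linarith [(abs_le.1 h).1]

lemma one_sub_le_of_tendsto_pr_Icc {u : ℕ → ℝ} {τ l : ℝ}
    (hu : Tendsto (fun n : ℕ => n * (1 - F (u n))) atTop (𝓝 τ))
    (hl : Tendsto (fun n => pr P (allLe X (Set.Icc 1 n) (u n))) atTop (𝓝 l)) : 1 - τ ≤ l :=
  le_of_tendsto_of_tendsto' (tendsto_const_nhds.sub hu) hl fun n => one_sub_le_pr_Icc hmeas hF n _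

end Probability

section Periodic

variable {Ω : Type*} [MeasurableSpace Ω] {P : Measure Ω} {X : ℕ → Ω → ℝ} {d : ℕ}

lemma PeriodicDep.pr_allLe_Icc_add (hper : PeriodicDep P X d) (hmeas : ∀ i, Measurable (X i))
    {a : ℕ} (ha : 1 ≤ a) (b : ℕ) (u : ℝ) :
    pr P (allLe X (Set.Icc (a + d) (b + d)) u) = pr P (allLe X (Set.Icc a b) u) := by
  let S : Set (Fin (b + 1 - a) → ℝ) := Set.univ.pi fun _ => Set.Iic u
  have hS : MeasurableSet S := MeasurableSet.univ_pi fun _ => measurableSet_Iic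
  let f (c : ℕ) (ω : Ω) (i : Fin (b + 1 - a)) : ℝ := X (a + i + c) ω
  have hf (c : ℕ) : Measurable (f c) := measurable_pi_lambda _ fun _ => hmeas _
  have hpre (c : ℕ) : allLe X (Set.Icc (a + c) (b + c)) u = f c ⁻¹' S := by
    ext ω
    simp only [allLe, S, f, Set.mem_ofPred_eq, Set.mem_Icc, Set.mem_preimage, Set.mem_univ_pi,
      Set.mem_Iic]
    refine ⟨fun h i => h _ ⟨by omega, by omega⟩, fun h i hi => ?_⟩
    simpa [show a + (i - c - a) + c = i by omega] using h ⟨i - c - a, by omega⟩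
  have hmap : P.map (f 0) = P.map (f d) := by
    simpa [f] using hper (b + 1 - a) (fun i => a + i) fun _ => by omega
  have h0 := hpre 0
  simp only [add_zero] at h0
  rw [hpre d, h0, pr_eq_real, pr_eq_real, measureReal_def, measureReal_def,
    ← Measure.map_apply (hf d) hS, ← Measure.map_apply (hf 0) hS, hmap]

lemma PeriodicDep.pr_allLe_Icc_add_of_dvd (hper : PeriodicDep P X d)
    (hmeas : ∀ i, Measurable (X i)) {a s : ℕ} (ha : 1 ≤ a) (hs : d ∣ s) (b : ℕ) (u : ℝ) :
    pr P (allLe X (Set.Icc (a + s) (b + s)) u) = pr P (allLe X (Set.Icc a b) u) := by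
  obtain ⟨c, rfl⟩ := hs
  induction c with
  | zero => simp
  | succ c ih =>
    rw [mul_add_one, ← add_assoc, ← add_assoc, hper.pr_allLe_Icc_add hmeas (by omega), ih]

end Periodic

def blockLength (d k n : ℕ) : ℕ := d * (n / (k * d))

lemma dvd_blockLength (d k n : ℕ) : d ∣ blockLength d k n := Dvd.intro _ rfl

lemma mul_blockLength_le (d k n : ℕ) : k * blockLength d k n ≤ n := by
  rw [blockLength, ← mul_assoc]; exact Nat.mul_div_le n (k * d)

lemma lt_mul_blockLength_add {d k : ℕ} (hd : 1 ≤ d) (hk : 1 ≤ k) (n : ℕ) :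
    n < k * blockLength d k n + k * d := by
  have := Nat.lt_mul_div_succ n (show 0 < k * d by positivity)
  rw [blockLength]; linarith

lemma blockLength_mul (d k j : ℕ) (hkd : 0 < k * d) : blockLength d k (k * d * j) = d * j := by
  rw [blockLength, Nat.mul_div_cancel_left j hkd]

lemma tendsto_blockLength_atTop {d k : ℕ} (hd : 1 ≤ d) (hk : 1 ≤ k) :
    Tendsto (blockLength d k) atTop atTop :=
  tendsto_atTop_mono (fun n => Nat.le_mul_of_pos_left _ hd)
    (Nat.tendsto_div_const_atTop (by positivity))

lemma tendsto_blockLength_div {d k : ℕ} (hd : 1 ≤ d) (hk : 1 ≤ k) :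
    Tendsto (fun n : ℕ => (blockLength d k n : ℝ) / n) atTop (𝓝 (k⁻¹ : ℝ)) := by
  have h := ((tendsto_nat_floor_mul_div_atTop (a := ((k * d : ℕ) : ℝ)⁻¹) (by positivity)).comp
    tendsto_natCast_atTop_atTop).const_mul (d : ℝ)
  have hlim : (d : ℝ) * ((k * d : ℕ) : ℝ)⁻¹ = (k : ℝ)⁻¹ := by
    have : (d : ℝ) ≠ 0 := by positivity
    push_cast; field_simp
  rw [hlim] at h
  refine h.congr fun n => ?_
  rw [Function.comp_apply, inv_mul_eq_div, Nat.floor_div_eq_div, blockLength]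
  push_cast; ring

lemma abs_sub_pow_le_of_abs_sub_mul_le {a : ℕ → ℝ} {p ε : ℝ} (hp0 : 0 ≤ p) (hp1 : p ≤ 1)
    (ha : a 1 = p) {k : ℕ} (hk : 1 ≤ k) (h : ∀ j, 1 ≤ j → j < k → |a (j + 1) - a j * p| ≤ ε) :
    |a k - p ^ k| ≤ (k - 1) * ε := by
  induction k, hk using Nat.le_induction with
  | base => simp [ha]
  | succ k hk ih =>
    have h1 := h k hk (by omega)
    have h2 := ih fun j hj hjk => h j hj (by omega)
    calc |a (k + 1) - p ^ (k + 1)| = |(a (k + 1) - a k * p) + (a k - p ^ k) * p| := by ring_nf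
    _ ≤ ε + (k - 1) * ε := by
      refine (abs_add_le _ _).trans (add_le_add h1 ?_)
      rw [abs_mul, abs_of_nonneg hp0]
      exact (mul_le_of_le_one_right (abs_nonneg _) hp1).trans h2
    _ = ((k + 1 : ℕ) - 1) * ε := by push_cast; ring

section Blocks

variable {Ω : Type*} [MeasurableSpace Ω] {P : Measure Ω} [IsProbabilityMeasure P]
  {X : ℕ → Ω → ℝ} {F : ℝ → ℝ} {d : ℕ} {xs : ℕ → ℝ} {q : ℕ → ℕ} {α : ℕ → ℝ}
  (hper : PeriodicDep P X d) (hmeas : ∀ i, Measurable (X i))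
  (hF : ∀ i, 1 ≤ i → ∀ t : ℝ, pr P {ω | X i ω ≤ t} = F t) (hA : AIMBound P X xs q α)
include hper hmeas hF hA

lemma abs_pr_Icc_add_sub_mul_le {n B m : ℕ} (hm : 0 < m) (hmB : m ≤ B) (hqm : 2 * q n ≤ m)
    (hn : B + m ≤ n) (hdB : d ∣ B) :
    |pr P (allLe X (Set.Icc 1 (B + m)) (xs n)) -
      pr P (allLe X (Set.Icc 1 B) (xs n)) * pr P (allLe X (Set.Icc 1 m) (xs n))| ≤
      α n + 2 * q n * (1 - F (xs n)) := by
  -- AIM factorises `[1, B] ∪ [B + Q + 1, B + m]`, which misses only `Q` indices of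
  -- `[1, B + m]`; periodicity moves its second piece to `[Q + 1, m]`.
  have hAIM := hA n 1 B (B + m) le_rfl (by omega) (by omega) hn (by omega) (by omega)
  set Q := q n
  set u := xs n
  have hshift : pr P (allLe X (Set.Icc (B + Q + 1) (B + m)) u) =
      pr P (allLe X (Set.Icc (Q + 1) m) u) := by
    rw [← hper.pr_allLe_Icc_add_of_dvd hmeas (a := Q + 1) (by omega) hdB m u,
      show Q + 1 + B = B + Q + 1 by omega, add_comm m]
  have hgap : |pr P (allLe X (Set.Icc 1 (B + m)) u) -
      pr P (allLe X (Set.Icc 1 B ∪ Set.Icc (B + Q + 1) (B + m)) u)| ≤ Q * (1 - F u) := by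
    have hdisj : Disjoint (Finset.Icc 1 B) (Finset.Icc (B + Q + 1) (B + m)) :=
      disjoint_left.2 fun i => by simp only [mem_Icc]; omega
    simpa using abs_pr_allLe_sub_le_of_subset hmeas hF
      (s := Finset.Icc 1 B ∪ Finset.Icc (B + Q + 1) (B + m)) (t := Finset.Icc 1 (B + m))
      (fun i => by simp only [mem_union, mem_Icc]; omega) (fun i hi => (mem_Icc.1 hi).1)
      (r := Q) (by rw [card_union_of_disjoint hdisj]; simp; omega) u
  have hhead : |pr P (allLe X (Set.Icc 1 m) u) - pr P (allLe X (Set.Icc (Q + 1) m) u)| ≤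
      Q * (1 - F u) := by
    simpa using abs_pr_allLe_sub_le_of_subset hmeas hF (s := Finset.Icc (Q + 1) m)
      (t := Finset.Icc 1 m) (fun i => by simp only [mem_Icc]; omega)
      (fun i hi => (mem_Icc.1 hi).1) (r := Q) (by simp; omega) u
  have hfactor : |pr P (allLe X (Set.Icc 1 B) u) * pr P (allLe X (Set.Icc (Q + 1) m) u) -
      pr P (allLe X (Set.Icc 1 B) u) * pr P (allLe X (Set.Icc 1 m) u)| ≤ Q * (1 - F u) := by
    rw [← mul_sub, abs_mul, abs_of_nonneg (pr_nonneg _), abs_sub_comm]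
    exact (mul_le_of_le_one_left (abs_nonneg _) (pr_le_one _)).trans hhead
  rw [hshift] at hAIM
  linarith [abs_sub_le (pr P (allLe X (Set.Icc 1 (B + m)) u))
    (pr P (allLe X (Set.Icc 1 B ∪ Set.Icc (B + Q + 1) (B + m)) u))
    (pr P (allLe X (Set.Icc 1 B) u) * pr P (allLe X (Set.Icc 1 m) u)),
    abs_sub_le (pr P (allLe X (Set.Icc 1 B ∪ Set.Icc (B + Q + 1) (B + m)) u))
    (pr P (allLe X (Set.Icc 1 B) u) * pr P (allLe X (Set.Icc (Q + 1) m) u))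
    (pr P (allLe X (Set.Icc 1 B) u) * pr P (allLe X (Set.Icc 1 m) u))]

lemma abs_pr_Icc_mul_sub_pow_le {n m k : ℕ} (hk : 1 ≤ k) (hm : 0 < m) (hdm : d ∣ m)
    (hqm : 2 * q n ≤ m) (hkm : k * m ≤ n) :
    |pr P (allLe X (Set.Icc 1 (k * m)) (xs n)) - pr P (allLe X (Set.Icc 1 m) (xs n)) ^ k| ≤
      (k - 1) * (α n + 2 * q n * (1 - F (xs n))) :=
  abs_sub_pow_le_of_abs_sub_mul_le (a := fun j => pr P (allLe X (Set.Icc 1 (j * m)) (xs n)))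
    (pr_nonneg _) (pr_le_one _) (by simp) hk fun j hj hjk => by
      simpa [add_one_mul] using abs_pr_Icc_add_sub_mul_le hper hmeas hF hA hm
        (Nat.le_mul_of_pos_left m hj) hqm (by nlinarith) (dvd_mul_of_dvd_right hdm j)

lemma abs_pr_Icc_sub_pow_le {n m k : ℕ} (hk : 1 ≤ k) (hm : 0 < m) (hdm : d ∣ m)
    (hqm : 2 * q n ≤ m) (hkm : k * m ≤ n) (hn : n ≤ k * m + k * d) (v : ℝ) :
    |pr P (allLe X (Set.Icc 1 n) (xs n)) - pr P (allLe X (Set.Icc 1 m) v) ^ k| ≤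
      (k * d : ℕ) * (1 - F (xs n)) + (k - 1) * (α n + 2 * q n * (1 - F (xs n))) +
        k * |m * (1 - F (xs n)) - m * (1 - F v)| := by
  set p := pr P (allLe X (Set.Icc 1 m) (xs n))
  set W := pr P (allLe X (Set.Icc 1 m) v)
  have htail : |pr P (allLe X (Set.Icc 1 n) (xs n)) - pr P (allLe X (Set.Icc 1 (k * m)) (xs n))|
      ≤ (k * d : ℕ) * (1 - F (xs n)) := by
    simpa using abs_pr_allLe_sub_le_of_subset hmeas hF (s := Finset.Icc 1 (k * m))
      (t := Finset.Icc 1 n) (fun i => by simp only [mem_Icc]; omega)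
      (fun i hi => (mem_Icc.1 hi).1) (r := k * d) (by simp; omega) (xs n)
  have hblocks := abs_pr_Icc_mul_sub_pow_le hper hmeas hF hA hk hm hdm hqm hkm
  have hlevel : |p ^ k - W ^ k| ≤ k * |m * (1 - F (xs n)) - m * (1 - F v)| := by
    have hmax : max |p| |W| ^ (k - 1) ≤ 1 := pow_le_one₀ (by positivity) <| max_le
      (by rw [abs_of_nonneg (pr_nonneg _)]; exact pr_le_one _)
      (by rw [abs_of_nonneg (pr_nonneg _)]; exact pr_le_one _)
    calc |p ^ k - W ^ k| ≤ |p - W| * k * max |p| |W| ^ (k - 1) := abs_pow_sub_pow_le ..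
    _ ≤ |p - W| * k := mul_le_of_le_one_right (by positivity) hmax
    _ ≤ k * |m * (1 - F (xs n)) - m * (1 - F v)| := by
      rw [mul_comm]
      exact mul_le_mul_of_nonneg_left (abs_pr_Icc_sub_le hmeas hF m _ _) (Nat.cast_nonneg _)
  linarith [abs_sub_le (pr P (allLe X (Set.Icc 1 n) (xs n)))
    (pr P (allLe X (Set.Icc 1 (k * m)) (xs n))) (p ^ k),
    abs_sub_le (pr P (allLe X (Set.Icc 1 n) (xs n))) (p ^ k) (W ^ k)]

end Blocks

def SatisfiesAIM {Ω : Type*} [MeasurableSpace Ω] (P : Measure Ω) (X : ℕ → Ω → ℝ)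
    (xs : ℕ → ℝ) : Prop :=
  ∃ (q : ℕ → ℕ) (α : ℕ → ℝ), ((fun n : ℕ => (q n : ℝ)) =o[atTop] (fun n : ℕ => (n : ℝ))) ∧
    Tendsto α atTop (𝓝 0) ∧ AIMBound P X xs q α

lemma tendsto_mul_of_tendsto_div {a b : ℕ → ℝ} {r c : ℝ}
    (hb : Tendsto (fun n => b n / n) atTop (𝓝 r)) (ha : Tendsto (fun n => n * a n) atTop (𝓝 c)) :
    Tendsto (fun n => b n * a n) atTop (𝓝 (r * c)) :=
  (hb.mul ha).congr' <| (eventually_ne_atTop 0).mono fun n hn => by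
    have : (n : ℝ) ≠ 0 := Nat.cast_ne_zero.2 hn
    field_simp

section Limits

variable {Ω : Type*} [MeasurableSpace Ω] {P : Measure Ω} [IsProbabilityMeasure P]
  {X : ℕ → Ω → ℝ} {F : ℝ → ℝ} {d : ℕ} (hd : 1 ≤ d) (hper : PeriodicDep P X d)
  (hmeas : ∀ i, Measurable (X i)) (hF : ∀ i, 1 ≤ i → ∀ t : ℝ, pr P {ω | X i ω ≤ t} = F t)
include hd hper hmeas hF

lemma tendsto_pr_Icc_sub_pow_blockLength {u w : ℕ → ℝ} {τ : ℝ} {k : ℕ} (hk : 1 ≤ k)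
    (hu : Tendsto (fun n : ℕ => n * (1 - F (u n))) atTop (𝓝 τ))
    (hw : Tendsto (fun n : ℕ => n * (1 - F (w n))) atTop (𝓝 (τ / k)))
    (hAIM : SatisfiesAIM P X u) :
    Tendsto (fun n => pr P (allLe X (Set.Icc 1 n) (u n)) -
      pr P (allLe X (Set.Icc 1 (blockLength d k n)) (w (blockLength d k n))) ^ k)
      atTop (𝓝 0) := by
  obtain ⟨q, α, hqo, hα, hA⟩ := hAIM
  set m := blockLength d k
  have hratio := tendsto_blockLength_div hd hk
  have hq : Tendsto (fun n => (q n : ℝ) / n) atTop (𝓝 0) := hqo.tendsto_div_nhds_zero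
  have htail : Tendsto (fun n => 1 - F (u n)) atTop (𝓝 0) := by
    simpa using tendsto_mul_of_tendsto_div tendsto_one_div_atTop_nhds_zero_nat hu
  have hqtail : Tendsto (fun n => (q n : ℝ) * (1 - F (u n))) atTop (𝓝 0) := by
    simpa using tendsto_mul_of_tendsto_div hq hu
  have hmu : Tendsto (fun n => (m n : ℝ) * (1 - F (u n))) atTop (𝓝 (τ / k)) := by
    simpa [div_eq_inv_mul] using tendsto_mul_of_tendsto_div hratio hu
  have hmw : Tendsto (fun n => (m n : ℝ) * (1 - F (w (m n)))) atTop (𝓝 (τ / k)) :=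
    hw.comp (tendsto_blockLength_atTop hd hk)
  have hbound : ∀ᶠ n in atTop, ‖pr P (allLe X (Set.Icc 1 n) (u n)) -
      pr P (allLe X (Set.Icc 1 (m n)) (w (m n))) ^ k‖ ≤
      (k * d : ℕ) * (1 - F (u n)) + (k - 1) * (α n + 2 * q n * (1 - F (u n))) +
        k * |m n * (1 - F (u n)) - m n * (1 - F (w (m n)))| := by
    have h2q : Tendsto (fun n => 2 * (q n : ℝ) / n) atTop (𝓝 0) := by
      simpa [mul_div_assoc] using hq.const_mul 2
    have hqm : ∀ᶠ n in atTop, (2 * q n : ℝ) / n < m n / n :=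
      h2q.eventually_lt hratio (by positivity)
    filter_upwards [hqm, (tendsto_blockLength_atTop hd hk).eventually_gt_atTop 0,
      eventually_gt_atTop 0] with n hqmn hmn hn
    rw [div_lt_div_iff_of_pos_right (by positivity)] at hqmn
    exact abs_pr_Icc_sub_pow_le hper hmeas hF hA hk hmn (dvd_blockLength d k n)
      (by exact_mod_cast hqmn.le) (mul_blockLength_le d k n) (lt_mul_blockLength_add hd hk n).le _
  refine squeeze_zero_norm' hbound ?_
  have hlim := ((htail.const_mul ((k * d : ℕ) : ℝ)).add
    ((hα.add (hqtail.const_mul 2)).const_mul ((k : ℝ) - 1))).add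
    ((hmu.sub hmw).abs.const_mul (k : ℝ))
  simp only [mul_zero, add_zero, sub_self, abs_zero] at hlim
  exact hlim.congr fun n => by ring

lemma tendsto_pr_Icc_rpow_inv {u w : ℕ → ℝ} {τ L : ℝ} {k : ℕ} (hk : 1 ≤ k)
    (hu : Tendsto (fun n : ℕ => n * (1 - F (u n))) atTop (𝓝 τ))
    (hw : Tendsto (fun n : ℕ => n * (1 - F (w n))) atTop (𝓝 (τ / k)))
    (hAu : SatisfiesAIM P X u) (hAw : SatisfiesAIM P X w)
    (hL : Tendsto (fun n => pr P (allLe X (Set.Icc 1 n) (u n))) atTop (𝓝 L)) :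
    Tendsto (fun n => pr P (allLe X (Set.Icc 1 n) (w n))) atTop (𝓝 (L ^ (k⁻¹ : ℝ))) := by
  have hkd : 0 < k * d := by positivity
  have hpow : Tendsto (fun j => pr P (allLe X (Set.Icc 1 (d * j)) (w (d * j))) ^ k) atTop
      (𝓝 L) := by
    have h := (hL.sub (tendsto_pr_Icc_sub_pow_blockLength hd hper hmeas hF hk hu hw hAu)).comp
      (tendsto_atTop_mono (fun j => Nat.le_mul_of_pos_left j hkd) tendsto_id)
    simpa [Function.comp_def, blockLength_mul d k _ hkd] using h
  have hroot : Tendsto (fun j => pr P (allLe X (Set.Icc 1 (d * j)) (w (d * j)))) atTop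
      (𝓝 (L ^ (k⁻¹ : ℝ))) :=
    (hpow.rpow_const (Or.inr (by positivity))).congr fun j =>
      Real.pow_rpow_inv_natCast (pr_nonneg _) (by omega)
  -- the case `k = 1` of the blocking estimate passes from multiples of `d` to all `n`
  have hfill := tendsto_pr_Icc_sub_pow_blockLength hd hper hmeas hF le_rfl hw
    (by simpa using hw) hAw
  have hV := hroot.comp (Nat.tendsto_div_const_atTop (n := 1 * d) (by omega))
  simpa [blockLength] using hfill.add (hV.pow 1)

lemma tendsto_pr_Icc_pow {u w : ℕ → ℝ} {σ l : ℝ} {k : ℕ} (hk : 1 ≤ k)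
    (hu : Tendsto (fun n : ℕ => n * (1 - F (u n))) atTop (𝓝 (k * σ)))
    (hw : Tendsto (fun n : ℕ => n * (1 - F (w n))) atTop (𝓝 σ)) (hAu : SatisfiesAIM P X u)
    (hl : Tendsto (fun n => pr P (allLe X (Set.Icc 1 n) (w n))) atTop (𝓝 l)) :
    Tendsto (fun n => pr P (allLe X (Set.Icc 1 n) (u n))) atTop (𝓝 (l ^ k)) := by
  have hblock := tendsto_pr_Icc_sub_pow_blockLength hd hper hmeas hF hk hu
    (by rwa [mul_div_cancel_left₀ _ (by positivity)]) hAu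
  simpa using hblock.add ((hl.comp (tendsto_blockLength_atTop hd hk)).pow k)

end Limits

lemma Real.exp_neg_le_of_forall_one_sub_div_le_rpow {τ L : ℝ} (hL : 0 ≤ L)
    (h : ∀ k : ℕ, 1 ≤ k → 1 - τ / k ≤ L ^ (k⁻¹ : ℝ)) : Real.exp (-τ) ≤ L := by
  refine le_of_tendsto (Real.tendsto_one_add_div_pow_exp (-τ)) ?_
  filter_upwards [eventually_ge_atTop (max 1 ⌈τ⌉₊)] with k hk
  have hk1 : 1 ≤ k := le_of_max_le_left hk
  have hτk : τ ≤ k := (Nat.le_ceil τ).trans (by exact_mod_cast le_of_max_le_right hk)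
  have h0 : 0 ≤ 1 - τ / k := sub_nonneg.2 ((div_le_one (by positivity)).2 hτk)
  calc (1 + -τ / k) ^ k = (1 - τ / k) ^ k := by ring
  _ ≤ (L ^ (k⁻¹ : ℝ)) ^ k := pow_le_pow_left₀ h0 (h k hk1) k
  _ = L := Real.rpow_inv_natCast_pow hL (by omega)

lemma exists_nat_mul_div_near {τ₀ τ δ : ℝ} (hτ₀ : 0 < τ₀) (hτ : 0 < τ) (hδ : 0 < δ) :
    ∃ j k : ℕ, 1 ≤ j ∧ 1 ≤ k ∧ dist (j * (τ₀ / k)) τ < δ := by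
  obtain ⟨k, hk⟩ := exists_nat_gt (τ₀ / δ)
  have hk0 : (0 : ℝ) < k := (div_pos hτ₀ hδ).trans hk
  have hc : 0 < τ₀ / k := div_pos hτ₀ hk0
  have hcδ : τ₀ / k < δ := by rw [div_lt_iff₀ hk0, mul_comm, ← div_lt_iff₀ hδ]; exact hk
  set j := ⌈τ / (τ₀ / k)⌉₊
  have hj1 : τ ≤ j * (τ₀ / k) := (div_le_iff₀ hc).1 (Nat.le_ceil _)
  have hj2 : j * (τ₀ / k) < τ + τ₀ / k := by
    have := Nat.ceil_lt_add_one (div_pos hτ hc).le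
    rwa [← lt_div_iff₀ hc, add_div, div_self hc.ne']
  refine ⟨j, k, Nat.ceil_pos.2 (div_pos hτ hc), by exact_mod_cast hk0, ?_⟩
  rw [Real.dist_eq, abs_lt]
  constructor <;> linarith

lemma tendsto_pr_Icc_of_forall_nat_mul_div {Ω : Type*} [MeasurableSpace Ω] {P : Measure Ω}
    [IsProbabilityMeasure P] {X : ℕ → Ω → ℝ} {F : ℝ → ℝ} (hmeas : ∀ i, Measurable (X i))
    (hF : ∀ i, 1 ≤ i → ∀ t : ℝ, pr P {ω | X i ω ≤ t} = F t) {x : ℝ → ℕ → ℝ}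
    (hx : ∀ τ : ℝ, 0 < τ → Tendsto (fun n : ℕ => n * (1 - F (x τ n))) atTop (𝓝 τ))
    {φ : ℝ → ℝ} (hφ : Continuous φ) {τ₀ : ℝ} (hτ₀ : 0 < τ₀)
    (hrat : ∀ j k : ℕ, 1 ≤ j → 1 ≤ k → Tendsto
      (fun n => pr P (allLe X (Set.Icc 1 n) (x (j * (τ₀ / k)) n))) atTop
      (𝓝 (φ (j * (τ₀ / k)))))
    {τ : ℝ} (hτ : 0 < τ) :
    Tendsto (fun n => pr P (allLe X (Set.Icc 1 n) (x τ n))) atTop (𝓝 (φ τ)) := by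
  refine Metric.tendsto_nhds.2 fun ε hε => ?_
  obtain ⟨δ, hδ, hφδ⟩ := Metric.continuousAt_iff.1 hφ.continuousAt (ε / 3) (by positivity)
  obtain ⟨j, k, hj, hk, hr⟩ :=
    exists_nat_mul_div_near hτ₀ hτ (lt_min hδ (by positivity : 0 < ε / 3))
  set r := (j : ℝ) * (τ₀ / k)
  have hr0 : 0 < r := by positivity
  have hclose : ∀ᶠ n in atTop, |n * (1 - F (x τ n)) - n * (1 - F (x r n))| < ε / 3 :=
    ((hx τ hτ).sub (hx r hr0)).abs.eventually_lt_const <| by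
      rw [← Real.dist_eq, dist_comm]; exact (lt_min_iff.1 hr).2
  filter_upwards [hclose, Metric.tendsto_nhds.1 (hrat j k hj hk) (ε / 3) (by positivity)]
    with n hn hrn
  have hτr : dist (pr P (allLe X (Set.Icc 1 n) (x τ n))) (pr P (allLe X (Set.Icc 1 n) (x r n)))
      < ε / 3 := by
    rw [Real.dist_eq]; exact (abs_pr_Icc_sub_le hmeas hF n _ _).trans_lt hn
  have hφr : dist (φ r) (φ τ) < ε / 3 := hφδ (lt_min_iff.1 hr).1
  linarith [dist_triangle4 (pr P (allLe X (Set.Icc 1 n) (x τ n)))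
    (pr P (allLe X (Set.Icc 1 n) (x r n))) (φ r) (φ τ)]

/-- Corollary to Theorem PeriodicThm: for a sequence with periodic
dependence and common marginal `F`, with for each `τ > 0` levels `xₙ(τ)` such that
`n·F̄(xₙ(τ)) → τ` and AIM(xₙ(τ)) holding, if `P(Mₙ ≤ xₙ(τ))` converges for a single
`τ > 0` then it converges for all `τ > 0`, with limit `e^{−τγ}` for some `γ ∈ [0,1]`. -/
theorem stmt8 {Ω : Type*} [MeasurableSpace Ω] (P : Measure Ω) [IsProbabilityMeasure P]
    (X : ℕ → Ω → ℝ) (F : ℝ → ℝ)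
    (d : ℕ) (hd : 1 ≤ d) (hper : PeriodicDep P X d)
    (hmeas : ∀ i, Measurable (X i))
    (hF : ∀ i, 1 ≤ i → ∀ t : ℝ, pr P {ω | X i ω ≤ t} = F t)
    (x : ℝ → ℕ → ℝ)
    (hx : ∀ τ : ℝ, 0 < τ →
      Tendsto (fun n : ℕ => (n : ℝ) * (1 - F (x τ n))) atTop (nhds τ))
    (hAIM : ∀ τ : ℝ, 0 < τ → ∃ (q : ℕ → ℕ) (α : ℕ → ℝ),
      (∀ m, 1 ≤ q m) ∧
      ((fun n : ℕ => (q n : ℝ)) =o[atTop] (fun n : ℕ => (n : ℝ))) ∧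
      Tendsto α atTop (nhds 0) ∧ AIMBound P X (x τ) q α)
    (hconv : ∃ τ₀ L : ℝ, 0 < τ₀ ∧
      Tendsto (fun n => pr P (allLe X (Set.Icc 1 n) (x τ₀ n))) atTop (nhds L)) :
    ∃ γ : ℝ, 0 ≤ γ ∧ γ ≤ 1 ∧ ∀ τ : ℝ, 0 < τ →
      Tendsto (fun n => pr P (allLe X (Set.Icc 1 n) (x τ n))) atTop
        (nhds (Real.exp (-(τ * γ)))) := by
  obtain ⟨τ₀, L, hτ₀, hL⟩ := hconv
  have hAIM' (τ : ℝ) (hτ : 0 < τ) : SatisfiesAIM P X (x τ) :=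
    let ⟨q, α, _, h⟩ := hAIM τ hτ; ⟨q, α, h⟩
  have hroot (k : ℕ) (hk : 1 ≤ k) : Tendsto (fun n => pr P (allLe X (Set.Icc 1 n) (x (τ₀ / k) n)))
      atTop (𝓝 (L ^ (k⁻¹ : ℝ))) :=
    have hτk : 0 < τ₀ / k := by positivity
    tendsto_pr_Icc_rpow_inv hd hper hmeas hF hk (hx τ₀ hτ₀) (hx _ hτk) (hAIM' τ₀ hτ₀)
      (hAIM' _ hτk) hL
  have hLexp : Real.exp (-τ₀) ≤ L :=
    Real.exp_neg_le_of_forall_one_sub_div_le_rpow (ge_of_tendsto' hL fun n => pr_nonneg _)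
      fun k hk => one_sub_le_of_tendsto_pr_Icc hmeas hF (hx _ (by positivity)) (hroot k hk)
  have hLpos : 0 < L := (Real.exp_pos _).trans_le hLexp
  set γ := -Real.log L / τ₀
  have hLγ : L = Real.exp (-(τ₀ * γ)) := by
    rw [mul_div_cancel₀ _ hτ₀.ne', neg_neg, Real.exp_log hLpos]
  refine ⟨γ, div_nonneg (neg_nonneg.2 (Real.log_nonpos hLpos.le
    (le_of_tendsto' hL fun n => pr_le_one _))) hτ₀.le, ?_, fun τ hτ => ?_⟩
  · rw [div_le_one hτ₀, neg_le]
    simpa using Real.log_le_log (Real.exp_pos _) hLexp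
  refine tendsto_pr_Icc_of_forall_nat_mul_div hmeas hF hx (φ := fun t => Real.exp (-(t * γ)))
    (by fun_prop) hτ₀ (fun j k hj hk => ?_) hτ
  have hτk : 0 < τ₀ / k := by positivity
  convert tendsto_pr_Icc_pow hd hper hmeas hF hj (hx _ (by positivity)) (hx _ hτk)
    (hAIM' _ (by positivity)) (hroot k hk) using 2
  rw [hLγ, ← Real.exp_mul, ← Real.exp_nat_mul]
  ring_nf
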